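/- Let φ be the standard normal density and Φ its cdf. For every μ ∈ ℝ, σ > 0, and k, a ∈ ℝ, ∫_ℝ exp(k|x−μ|/σ) · (1/σ) φ((x−μ−a)/σ) dx = e^{ka/σ + k²/2} Φ(k + a/σ) + e^{−ka/σ + k²/2} Φ(k − a/σ). Consequently the Bimodal-Unimodal Normal function f(x) = c_{σ,k,a} exp(k|x−μ|/σ) (1/σ) φ((x−μ−a)/σ), with c_{σ,k,a}^{−1} = e^{ka/σ + k²/2} Φ(k + a/σ) + e^{−ka/σ + k²/2} Φ(k − a/σ), is a pdf on ℝ. -/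
import Mathlib

open MeasureTheory Real Set

noncomputable def phi (x : ℝ) : ℝ := (Real.sqrt (2 * Real.pi))⁻¹ * Real.exp (-(x ^ 2) / 2)

noncomputable def Phi (x : ℝ) : ℝ := ∫ t in Set.Iic x, phi t

lemma phi_pos (x : ℝ) : 0 < phi x := by
  have h : 0 < Real.sqrt (2 * Real.pi) := Real.sqrt_pos.mpr (by positivity)
  exact mul_pos (inv_pos.mpr h) (Real.exp_pos _)

lemma phi_nonneg (x : ℝ) : 0 ≤ phi x := (phi_pos x).le

lemma phi_neg (x : ℝ) : phi (-x) = phi x := by simp [phi]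

lemma phi_integrable : Integrable phi := by
  have h : phi = fun x => (Real.sqrt (2 * Real.pi))⁻¹ • Real.exp (-(1/2 : ℝ) * x ^ 2) := by
    funext x
    simp only [phi, smul_eq_mul]
    congr 1
    ring_nf
  rw [h]
  exact (integrable_exp_neg_mul_sq (b := (1/2:ℝ)) (by norm_num)).smul ((Real.sqrt (2 * Real.pi))⁻¹)

lemma integral_Iic_phi_sub (c m : ℝ) : (∫ y in Iic c, phi (y - m)) = Phi (c - m) := by
  have hmp : MeasurePreserving (fun x : ℝ => x - m) volume volume :=
    measurePreserving_sub_right volume m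
  have hemb : MeasurableEmbedding (fun x : ℝ => x - m) :=
    (MeasurableEquiv.subRight m).measurableEmbedding
  have := hmp.setIntegral_preimage_emb hemb phi (Iic (c - m))
  rw [preimage_sub_const_Iic, sub_add_cancel] at this
  exact this

lemma integral_Ioi_phi_sub (m : ℝ) : (∫ y in Ioi 0, phi (y - m)) = Phi m := by
  have hmp : MeasurePreserving (fun x : ℝ => -x) volume volume :=
    Measure.measurePreserving_neg volume
  have hemb : MeasurableEmbedding (fun x : ℝ => -x) :=
    (MeasurableEquiv.neg ℝ).measurableEmbedding
  have h := hmp.setIntegral_preimage_emb hemb (fun y => phi (y - m)) (Ioi 0)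
  have hpre : (fun x : ℝ => -x) ⁻¹' Ioi 0 = Iio 0 := by
    ext x; simp
  rw [hpre] at h
  have heq : (∫ x in Iio (0:ℝ), phi (-x - m)) = ∫ x in Iio (0:ℝ), phi (x - (-m)) := by
    apply setIntegral_congr_fun measurableSet_Iio
    intro x _
    dsimp only
    rw [show -x - m = -(x - (-m)) by ring, phi_neg]
  rw [heq, ← integral_Iic_eq_integral_Iio, integral_Iic_phi_sub] at h
  simpa using h.symm

lemma exp_mul_phi (k b y : ℝ) :
    Real.exp (k * y) * phi (y - b) = Real.exp (k * b + k ^ 2 / 2) * phi (y - b - k) := by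
  simp only [phi]
  rw [mul_left_comm, mul_left_comm (Real.exp (k * b + k ^ 2 / 2)), ← Real.exp_add, ← Real.exp_add]
  congr 2
  ring

lemma eq_Iic (k b y : ℝ) (hy : y ≤ 0) :
    Real.exp (k * |y|) * phi (y - b)
      = Real.exp (-(k * b) + k ^ 2 / 2) * phi (y - (b - k)) := by
  rw [abs_of_nonpos hy]
  simp only [phi]
  rw [mul_left_comm, mul_left_comm (Real.exp (-(k * b) + k ^ 2 / 2)),
    ← Real.exp_add, ← Real.exp_add]
  congr 2
  ring

lemma eq_Ioi (k b y : ℝ) (hy : 0 ≤ y) :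
    Real.exp (k * |y|) * phi (y - b)
      = Real.exp (k * b + k ^ 2 / 2) * phi (y - (b + k)) := by
  rw [abs_of_nonneg hy]
  simp only [phi]
  rw [mul_left_comm, mul_left_comm (Real.exp (k * b + k ^ 2 / 2)),
    ← Real.exp_add, ← Real.exp_add]
  congr 2
  ring

lemma bun_integrable (k b : ℝ) :
    Integrable (fun y => Real.exp (k * |y|) * phi (y - b)) := by
  have h1 : IntegrableOn (fun y => Real.exp (k * |y|) * phi (y - b)) (Iic 0) := by
    have hI : IntegrableOn (fun y => Real.exp (-(k * b) + k ^ 2 / 2) * phi (y - (b - k)))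
        (Iic 0) :=
      ((phi_integrable.comp_sub_right (b - k)).const_mul
        (Real.exp (-(k * b) + k ^ 2 / 2))).integrableOn
    exact hI.congr_fun (fun y hy => (eq_Iic k b y hy).symm) measurableSet_Iic
  have h2 : IntegrableOn (fun y => Real.exp (k * |y|) * phi (y - b)) (Ioi 0) := by
    have hI : IntegrableOn (fun y => Real.exp (k * b + k ^ 2 / 2) * phi (y - (b + k)))
        (Ioi 0) :=
      ((phi_integrable.comp_sub_right (b + k)).const_mul
        (Real.exp (k * b + k ^ 2 / 2))).integrableOn
    exact hI.congr_fun (fun y hy => (eq_Ioi k b y hy.le).symm) measurableSet_Ioi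
  rw [← integrableOn_univ, ← Iic_union_Ioi (a := (0:ℝ))]
  exact h1.union h2

lemma J_eq (k b : ℝ) :
    (∫ y, Real.exp (k * |y|) * phi (y - b))
      = Real.exp (k * b + k ^ 2 / 2) * Phi (k + b)
        + Real.exp (-(k * b) + k ^ 2 / 2) * Phi (k - b) := by
  rw [← intervalIntegral.integral_Iic_add_Ioi (b := (0:ℝ)) ((bun_integrable k b).integrableOn)
    ((bun_integrable k b).integrableOn)]
  have hIic : (∫ y in Iic (0:ℝ), Real.exp (k * |y|) * phi (y - b))
      = Real.exp (-(k * b) + k ^ 2 / 2) * Phi (k - b) := by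
    rw [setIntegral_congr_fun measurableSet_Iic (fun y hy => eq_Iic k b y hy),
      integral_const_mul, integral_Iic_phi_sub]
    rw [show (0:ℝ) - (b - k) = k - b by ring]
  have hIoi : (∫ y in Ioi (0:ℝ), Real.exp (k * |y|) * phi (y - b))
      = Real.exp (k * b + k ^ 2 / 2) * Phi (k + b) := by
    rw [setIntegral_congr_fun measurableSet_Ioi (fun y hy => eq_Ioi k b y hy.le),
      integral_const_mul, integral_Ioi_phi_sub]
    rw [show b + k = k + b by ring]
  rw [hIic, hIoi]
  ring

lemma Phi_pos (m : ℝ) : 0 < Phi m := by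
  unfold Phi
  rw [setIntegral_pos_iff_support_of_nonneg_ae
    (Filter.Eventually.of_forall fun x => phi_nonneg x) phi_integrable.integrableOn]
  have hsupp : Function.support phi = univ := by
    ext x; simp [Function.mem_support, (phi_pos x).ne']
  rw [hsupp, univ_inter, Real.volume_Iic]
  exact ENNReal.zero_lt_top

lemma scale (μ σ k a : ℝ) (hσ : 0 < σ) :
    (∫ x, Real.exp (k * |x - μ| / σ) * ((1 / σ) * phi ((x - μ - a) / σ)))
      = ∫ y, Real.exp (k * |y|) * phi (y - a / σ) := by
  have h1 : ∀ x : ℝ, Real.exp (k * |x - μ| / σ) * ((1 / σ) * phi ((x - μ - a) / σ))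
      = (1 / σ) * (Real.exp (k * |(x - μ) / σ|) * phi ((x - μ) / σ - a / σ)) := by
    intro x
    rw [abs_div, abs_of_pos hσ, ← sub_div, mul_div_assoc]
    ring
  simp_rw [h1]
  rw [integral_const_mul]
  set g : ℝ → ℝ := fun y => Real.exp (k * |y|) * phi (y - a / σ) with hg
  have h2 : (∫ x : ℝ, g ((x - μ) / σ)) = σ * ∫ y, g y := by
    have h3 : (∫ x : ℝ, g ((x - μ) / σ)) = ∫ x : ℝ, g (x / σ) :=
      integral_sub_right_eq_self (fun x => g (x / σ)) μ
    rw [h3, Measure.integral_comp_div g σ, abs_of_pos hσ, smul_eq_mul]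
  have h4 : (∫ x : ℝ, Real.exp (k * |(x - μ) / σ|) * phi ((x - μ) / σ - a / σ))
      = ∫ x : ℝ, g ((x - μ) / σ) := rfl
  rw [h4, h2, ← mul_assoc]
  rw [one_div, inv_mul_cancel₀ hσ.ne', one_mul]

lemma Phi_nonneg (m : ℝ) : 0 ≤ Phi m := (Phi_pos m).le

theorem stmt_14 (μ σ k a : ℝ) (hσ : 0 < σ) :
    let c : ℝ := (Real.exp (k * a / σ + k ^ 2 / 2) * Phi (k + a / σ) +
      Real.exp (-(k * a) / σ + k ^ 2 / 2) * Phi (k - a / σ))⁻¹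
    let f : ℝ → ℝ := fun x =>
      c * Real.exp (k * |x - μ| / σ) * ((1 / σ) * phi ((x - μ - a) / σ))
    (∫ x, Real.exp (k * |x - μ| / σ) * ((1 / σ) * phi ((x - μ - a) / σ)))
        = Real.exp (k * a / σ + k ^ 2 / 2) * Phi (k + a / σ) +
          Real.exp (-(k * a) / σ + k ^ 2 / 2) * Phi (k - a / σ) ∧
      (∀ x, 0 ≤ f x) ∧ (∫ x, f x) = 1 := by
  intro c f
  have hkey : (∫ x, Real.exp (k * |x - μ| / σ) * ((1 / σ) * phi ((x - μ - a) / σ)))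
      = Real.exp (k * a / σ + k ^ 2 / 2) * Phi (k + a / σ) +
        Real.exp (-(k * a) / σ + k ^ 2 / 2) * Phi (k - a / σ) := by
    rw [scale μ σ k a hσ, J_eq k (a / σ), mul_div_assoc, neg_div, mul_div_assoc]
  have hS : 0 < Real.exp (k * a / σ + k ^ 2 / 2) * Phi (k + a / σ) +
      Real.exp (-(k * a) / σ + k ^ 2 / 2) * Phi (k - a / σ) :=
    add_pos (mul_pos (Real.exp_pos _) (Phi_pos _)) (mul_pos (Real.exp_pos _) (Phi_pos _))
  have hc : 0 ≤ c := inv_nonneg.mpr hS.le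
  refine ⟨hkey, ?_, ?_⟩
  · intro x
    exact mul_nonneg (mul_nonneg hc (Real.exp_pos _).le)
      (mul_nonneg (by positivity) (phi_nonneg _))
  · have hf : ∀ x, f x
        = c * (Real.exp (k * |x - μ| / σ) * ((1 / σ) * phi ((x - μ - a) / σ))) := by
      intro x
      simp only [f, mul_assoc]
    simp_rw [hf]
    rw [integral_const_mul, hkey]
    exact inv_mul_cancel₀ hS.ne'
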